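/- Optimal substructure: if X = {x_1 < ... < x_{k-1}} yields an optimal normalized specialization for the range [1,n] with k intervals (k > 1), then X' = {x_1, ..., x_{k-2}} yields an optimal normalized specialization for the range [1, x_{k-1}] with k-1 intervals. -/

import Mathlib

/-- The normalized specialization function `φ_X^m` for the range `[1,m]`. -/
noncomputable def normSpec (m : ℕ) (X : Finset ℕ) (i : ℕ) : ℕ :=
  sInf {x : ℕ | x ∈ insert m X ∧ i ≤ x}

/-- Cost of the normalized specialization determined by `X` on the range `[1,m]`. -/
noncomputable def normCost (m : ℕ) (s f : ℕ → ℕ) (X : Finset ℕ) : ℕ :=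
  ∑ i ∈ Finset.Icc 1 m, s (normSpec m X i) * f i

lemma normSpec_eq_of_mem (n M : ℕ) (X : Finset ℕ) (hM : M ∈ X) (hMn : M ≤ n)
    (i : ℕ) (hi : i ≤ M) :
    normSpec n X i = sInf {x : ℕ | x ∈ X ∧ i ≤ x} := by
  have hne : {x | x ∈ X ∧ i ≤ x}.Nonempty := ⟨M, hM, hi⟩
  have ha : sInf {x : ℕ | x ∈ X ∧ i ≤ x} ∈ {x | x ∈ X ∧ i ≤ x} := Nat.sInf_mem hne
  unfold normSpec
  apply le_antisymm
  · exact Nat.sInf_le ⟨Finset.mem_insert_of_mem ha.1, ha.2⟩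
  · have hne2 : {x : ℕ | x ∈ insert n X ∧ i ≤ x}.Nonempty :=
      ⟨M, Finset.mem_insert_of_mem hM, hi⟩
    have hb := Nat.sInf_mem hne2
    rcases Finset.mem_insert.mp hb.1 with h | h
    · calc sInf {x : ℕ | x ∈ X ∧ i ≤ x} ≤ M := Nat.sInf_le ⟨hM, hi⟩
        _ ≤ n := hMn
        _ = _ := h.symm
    · exact Nat.sInf_le ⟨h, hb.2⟩

lemma normSpec_top (n i : ℕ) (X : Finset ℕ) (h : ∀ x ∈ X, x < i) (hi : i ≤ n) :
    normSpec n X i = n := by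
  unfold normSpec
  have : {x : ℕ | x ∈ insert n X ∧ i ≤ x} = {n} := by
    ext x
    simp only [Set.mem_setOf_eq, Finset.mem_insert, Set.mem_singleton_iff]
    constructor
    · rintro ⟨h1 | h1, h2⟩
      · exact h1
      · exact absurd h2 (by exact Nat.not_le.mpr (h x h1))
    · rintro rfl; exact ⟨Or.inl rfl, hi⟩
  rw [this, csInf_singleton]

lemma cost_split (n M : ℕ) (hM1 : 1 ≤ M) (hMn : M ≤ n) (s f : ℕ → ℕ)
    (X : Finset ℕ) (hM : M ∈ X) (hle : ∀ x ∈ X, x ≤ M) :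
    normCost n s f X =
      normCost M s f (X.erase M) + ∑ i ∈ Finset.Icc (M + 1) n, s n * f i := by
  unfold normCost
  have h0 : ∀ a b : ℕ, Finset.Ioc a b = Finset.Icc (a+1) b := by
    intro a b; ext x; simp [Finset.mem_Ioc, Finset.mem_Icc]
  rw [← h0 0 n, ← h0 0 M, ← Finset.sum_Ioc_consecutive (fun i => s (normSpec n X i) * f i)
      (by omega : 0 ≤ M) (by omega : M ≤ n), h0 M n]
  congr 1
  · apply Finset.sum_congr rfl
    intro i hi
    simp only [Finset.mem_Ioc] at hi
    have h1 : normSpec n X i = sInf {x : ℕ | x ∈ X ∧ i ≤ x} :=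
      normSpec_eq_of_mem n M X hM hMn i hi.2
    have h2 : normSpec M (X.erase M) i = sInf {x : ℕ | x ∈ X ∧ i ≤ x} := by
      unfold normSpec
      rw [Finset.insert_erase hM]
    rw [h1, h2]
  · apply Finset.sum_congr rfl
    intro i hi
    simp only [Finset.mem_Icc] at hi
    rw [normSpec_top n i X (fun x hx => by have := hle x hx; omega) hi.2]


/-- Optimal substructure: if `X = {x_1 < ... < x_{k-1}}` yields an optimal
normalized specialization for the range `[1,n]` with `k` intervals (`k > 1`),
then `X' = X \ {x_{k-1}}` yields an optimal normalized specialization for the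
range `[1, x_{k-1}]` with `k-1` intervals. -/
theorem optimal_substructure (n k : ℕ) (hn : 1 ≤ n) (hk : 1 < k) (hkn : k ≤ n)
    (s f : ℕ → ℕ)
    (hs : ∀ i ∈ Finset.Icc 1 n, ∀ j ∈ Finset.Icc 1 n, i ≤ j → s i ≤ s j)
    (X : Finset ℕ) (hX : X ⊆ Finset.Icc 1 (n - 1)) (hcard : X.card = k - 1)
    (hXne : X.Nonempty)
    (hopt : ∀ Y : Finset ℕ, Y ⊆ Finset.Icc 1 (n - 1) → Y.card = k - 1 →
      normCost n s f X ≤ normCost n s f Y) :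
    ∀ Y : Finset ℕ, Y ⊆ Finset.Icc 1 (X.max' hXne - 1) → Y.card = k - 2 →
      normCost (X.max' hXne) s f (X.erase (X.max' hXne)) ≤
        normCost (X.max' hXne) s f Y := by
  intro Y hY hYcard
  set M := X.max' hXne with hMdef
  have hMmem : M ∈ X := X.max'_mem hXne
  have hMIcc := hX hMmem
  simp only [Finset.mem_Icc] at hMIcc
  have hM1 : 1 ≤ M := hMIcc.1
  have hMn : M ≤ n := by omega
  have hYlt : ∀ y ∈ Y, y < M := by
    intro y hy
    have := hY hy
    simp only [Finset.mem_Icc] at this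
    omega
  have hMY : M ∉ Y := fun h => lt_irrefl M (hYlt M h)
  -- split X
  have hsplitX := cost_split n M hM1 hMn s f X hMmem (fun x hx => X.le_max' x hx)
  -- split Z = insert M Y
  have hZle : ∀ x ∈ insert M Y, x ≤ M := by
    intro x hx
    rcases Finset.mem_insert.mp hx with rfl | h
    · exact le_rfl
    · exact (hYlt x h).le
  have hsplitZ := cost_split n M hM1 hMn s f (insert M Y)
    (Finset.mem_insert_self _ _) hZle
  rw [Finset.erase_insert hMY] at hsplitZ
  have hZsub : insert M Y ⊆ Finset.Icc 1 (n - 1) := by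
    intro x hx
    rcases Finset.mem_insert.mp hx with rfl | h
    · exact hX hMmem
    · have := hY h
      simp only [Finset.mem_Icc] at this ⊢
      omega
  have hZcard : (insert M Y).card = k - 1 := by
    rw [Finset.card_insert_of_notMem hMY, hYcard]; omega
  have := hopt (insert M Y) hZsub hZcard
  rw [hsplitX, hsplitZ] at this
  omega
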